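/- arXiv:1912.07201 — 4 statements merged into one kernel-verified Lean document; each statement's English description precedes it below -/
import Mathlib

section
/- For m ∈ ℤ, σ ∈ ℝ, k ∈ ℕⁿ and l ∈ (ℤ_{≥0})ⁿ, the shifted-domain iterated log-sine integral satisfies Ls_k^l(2mπ, 2mπ+σ) = Σ_{j ≤ l} (2mπ)^{|j|} (∏_u C(l_u, j_u)) Ls_{k-j}^{l-j}(σ), where the sum is over all j = (j₁,…,j_n) ∈ (ℤ_{≥0})ⁿ with j_u ≤ l_u for all u. -/
open MeasureTheory Real

/-- `A θ = log |2 sin (θ/2)|`. -/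
noncomputable def A (θ : ℝ) : ℝ := Real.log |2 * Real.sin (θ / 2)|

/-- Nested iterated integral; the list is in reverse order (outermost variable first). -/
noncomputable def LsNest (ρ : ℝ) : List (ℕ × ℕ) → ℝ → ℝ
  | [] => fun _ => 1
  | p :: rest => fun σ => ∫ θ in ρ..σ, θ ^ p.2 * A θ ^ (p.1 - 1 - p.2) * LsNest ρ rest θ

/-- The iterated log-sine integral `Ls_k^l(ρ; σ)`. -/
noncomputable def Ls {n : ℕ} (k l : Fin n → ℕ) (ρ σ : ℝ) : ℝ :=
  (-1 : ℝ) ^ n * LsNest ρ ((List.ofFn fun u => (k u, l u)).reverse) σ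

/-!
Shifting every variable by `2mπ` and using that `A` is `2π`-periodic turns the weights
`θ_u ^ l_u` into `(φ_u + 2mπ) ^ l_u`; expanding these binomially and integrating term by term,
one variable at a time from the outermost inwards, gives the formula. Term-by-term integration
needs every power of `A` to be locally integrable: on `(0, π]` Jordan's inequality squeezes `A θ`
between `log 2 + log (θ / π)` and `log 2`, and `|log x| ≤ x ^ (-t) / t` on `(0, 1]`.
-/

lemma abs_log_le_rpow_neg_div {x t : ℝ} (h0 : 0 < x) (h1 : x ≤ 1) (ht : 0 < t) :
    |log x| ≤ x ^ (-t) / t := by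
  have h := abs_log_mul_self_rpow_lt x t h0 h1 ht
  rw [abs_mul, abs_of_pos (rpow_pos_of_pos h0 t), ← lt_div_iff₀ (rpow_pos_of_pos h0 t)] at h
  rw [rpow_neg h0.le]
  exact h.le.trans_eq (by ring)

lemma A_neg (θ : ℝ) : A (-θ) = A θ := by
  rw [A, A, neg_div, sin_neg, mul_neg, abs_neg]

lemma A_periodic : Function.Periodic A (2 * π) := by
  intro θ
  rw [A, A, add_div, mul_div_cancel_left₀ π two_ne_zero, sin_add_pi, mul_neg, abs_neg]

lemma measurable_A : Measurable A := by unfold A; fun_prop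

lemma A_le_log_two (θ : ℝ) : A θ ≤ log 2 := by
  rcases eq_or_ne (sin (θ / 2)) 0 with h | h
  · simp [A, h, log_nonneg one_le_two]
  · rw [A, abs_mul, abs_two]
    gcongr
    linarith [abs_sin_le_one (θ / 2)]

lemma log_two_add_log_div_pi_le_A {θ : ℝ} (h0 : 0 < θ) (hπ : θ ≤ π) :
    log 2 + log (θ / π) ≤ A θ := by
  have hx : 0 < θ / π := div_pos h0 pi_pos
  have hsin : 2 * (θ / π) ≤ 2 * sin (θ / 2) := by
    have := mul_le_sin (x := θ / 2) (by positivity) (by linarith)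
    have : 2 / π * (θ / 2) = θ / π := by field_simp
    linarith
  rw [A, ← log_mul two_ne_zero hx.ne', abs_of_pos (by linarith)]
  exact log_le_log (by positivity) hsin

lemma abs_A_le_rpow {θ t : ℝ} (h0 : 0 < θ) (hπ : θ ≤ π) (ht : 0 < t) :
    |A θ| ≤ (1 / t + log 2) * (θ / π) ^ (-t) := by
  have hx0 : 0 < θ / π := div_pos h0 pi_pos
  have hx1 : θ / π ≤ 1 := (div_le_one pi_pos).2 hπ
  have hlog := abs_log_le_rpow_neg_div hx0 hx1 ht
  have hone : 1 ≤ (θ / π) ^ (-t) := one_le_rpow_of_pos_of_le_one_of_nonpos hx0 hx1 (by linarith)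
  have hlog2 : 0 ≤ log 2 := log_nonneg one_le_two
  have hA : |A θ| ≤ |log (θ / π)| + log 2 := by
    have := log_two_add_log_div_pi_le_A h0 hπ
    have := A_le_log_two θ
    have := neg_abs_le (log (θ / π))
    rw [abs_le]; constructor <;> linarith
  calc |A θ| ≤ (θ / π) ^ (-t) / t + log 2 * (θ / π) ^ (-t) := by nlinarith
    _ = (1 / t + log 2) * (θ / π) ^ (-t) := by ring

lemma intervalIntegrable_A_pow_zero_pi (e : ℕ) :
    IntervalIntegrable (fun θ => A θ ^ e) volume 0 π := by
  set t : ℝ := 1 / (e + 1)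
  set K : ℝ := 1 / t + log 2
  have ht : 0 < t := by positivity
  have hexp : -1 < -t * e := by
    have : t * e < 1 := by rw [div_mul_eq_mul_div, one_mul, div_lt_one (by positivity)]; linarith
    linarith
  refine ((intervalIntegral.intervalIntegrable_rpow' hexp).const_mul (K ^ e / π ^ (-t * e)))
    |>.mono_fun' (measurable_A.pow_const e).aestronglyMeasurable ?_
  rw [Set.uIoc_of_le pi_pos.le]
  filter_upwards [ae_restrict_mem measurableSet_Ioc] with θ ⟨h0, hπ⟩
  calc ‖A θ ^ e‖ = |A θ| ^ e := by rw [norm_eq_abs, abs_pow]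
    _ ≤ (K * (θ / π) ^ (-t)) ^ e := pow_le_pow_left₀ (abs_nonneg _) (abs_A_le_rpow h0 hπ ht) e
    _ = K ^ e / π ^ (-t * e) * θ ^ (-t * e) := by
      rw [mul_pow, ← rpow_mul_natCast (by positivity), div_rpow h0.le pi_pos.le]
      ring

lemma intervalIntegrable_A_pow (e : ℕ) (a b : ℝ) :
    IntervalIntegrable (fun θ => A θ ^ e) volume a b := by
  have hpos := intervalIntegrable_A_pow_zero_pi e
  have hneg : IntervalIntegrable (fun θ => A θ ^ e) volume (-π) 0 := by
    simpa [A_neg] using ((IntervalIntegrable.iff_comp_neg (f := fun θ => A θ ^ e)).1 hpos).symm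
  have hper : Function.Periodic (fun θ => A θ ^ e) (2 * π) := fun θ => by simp only [A_periodic θ]
  refine hper.intervalIntegrable (t := -π) two_pi_pos.ne' ?_ a b
  convert hneg.trans hpos using 1
  ring

lemma intervalIntegrable_pow_mul_A_pow_mul (p : ℕ × ℕ) {g : ℝ → ℝ} (hg : Continuous g)
    (a b : ℝ) :
    IntervalIntegrable (fun θ => θ ^ p.2 * A θ ^ (p.1 - 1 - p.2) * g θ) volume a b :=
  ((intervalIntegrable_A_pow _ a b).continuousOn_mul (continuous_pow p.2).continuousOn)
    |>.mul_continuousOn hg.continuousOn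

lemma continuous_LsNest (ρ : ℝ) : ∀ L : List (ℕ × ℕ), Continuous (LsNest ρ L)
  | [] => continuous_const
  | p :: L => intervalIntegral.continuous_primitive
      (intervalIntegrable_pow_mul_A_pow_mul p (continuous_LsNest ρ L)) ρ

lemma integral_sum_mul_LsNest {ι : Type*} [Fintype ι] (ρ σ : ℝ) (c : ι → ℝ) (p : ι → ℕ × ℕ)
    (L : ι → List (ℕ × ℕ)) :
    ∫ θ in ρ..σ, ∑ i, c i * (θ ^ (p i).2 * A θ ^ ((p i).1 - 1 - (p i).2) * LsNest ρ (L i) θ) =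
      ∑ i, c i * LsNest ρ (p i :: L i) σ := by
  rw [intervalIntegral.integral_finsetSum fun i _ =>
    (intervalIntegrable_pow_mul_A_pow_mul (p i) (continuous_LsNest ρ (L i)) ρ σ).const_mul (c i)]
  simp only [intervalIntegral.integral_const_mul, LsNest]

lemma List.reverse_ofFn_succ {α : Type*} {n : ℕ} (f : Fin (n + 1) → α) :
    (List.ofFn f).reverse = f (Fin.last n) :: (List.ofFn fun u => f u.castSucc).reverse := by
  rw [List.ofFn_succ', List.concat_eq_append, List.reverse_concat]

lemma add_pow_eq_sum_fin (x y : ℝ) (N : ℕ) :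
    (x + y) ^ N = ∑ j : Fin (N + 1), y ^ (j : ℕ) * N.choose j * x ^ (N - j) := by
  rw [add_comm, add_pow, ← Fin.sum_univ_eq_sum_range (fun j => y ^ j * x ^ (N - j) * N.choose j)]
  exact Finset.sum_congr rfl fun j _ => by ring

theorem LsNest_shift {c : ℝ} (hc : Function.Periodic A c) :
    ∀ (n : ℕ) (k l : Fin n → ℕ) (σ : ℝ),
      LsNest c (List.ofFn fun u => (k u, l u)).reverse (c + σ) =
        ∑ j : (u : Fin n) → Fin (l u + 1),
          c ^ (∑ u, (j u : ℕ)) * (∏ u, ((l u).choose (j u) : ℝ)) *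
            LsNest 0 (List.ofFn fun u => (k u - j u, l u - j u)).reverse σ
  | 0, k, l, σ => by simp [LsNest]
  | n + 1, k, l, σ => by
    set kN := k (Fin.last n)
    set lN := l (Fin.last n)
    set rest := (List.ofFn fun u : Fin n => (k u.castSucc, l u.castSucc)).reverse
    let restJ (j : (u : Fin n) → Fin (l u.castSucc + 1)) :=
      (List.ofFn fun u : Fin n => (k u.castSucc - j u, l u.castSucc - j u)).reverse
    let coef (q : Fin (lN + 1) × ((u : Fin n) → Fin (l u.castSucc + 1))) : ℝ :=
      c ^ ((q.1 : ℕ) + ∑ u, (q.2 u : ℕ)) *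
        (lN.choose q.1 * ∏ u, ((l u.castSucc).choose (q.2 u) : ℝ))
    have hpoint (θ : ℝ) :
        (θ + c) ^ lN * A (θ + c) ^ (kN - 1 - lN) * LsNest c rest (θ + c) =
          ∑ q, coef q * (θ ^ (lN - q.1) * A θ ^ ((kN - q.1) - 1 - (lN - q.1)) *
            LsNest 0 (restJ q.2) θ) := by
      rw [hc θ, add_comm θ c, LsNest_shift hc n, add_comm c θ, add_pow_eq_sum_fin,
        Fintype.sum_prod_type, Finset.sum_mul, Finset.sum_mul]
      refine Finset.sum_congr rfl fun jN _ => ?_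
      rw [Finset.mul_sum]
      refine Finset.sum_congr rfl fun j _ => ?_
      have : kN - 1 - lN = (kN - jN) - 1 - (lN - jN) := by omega
      simp only [coef, restJ, this, pow_add]
      ring
    calc LsNest c (List.ofFn fun u => (k u, l u)).reverse (c + σ)
        = ∫ θ in (0 : ℝ)..σ,
            (θ + c) ^ lN * A (θ + c) ^ (kN - 1 - lN) * LsNest c rest (θ + c) := by
          rw [List.reverse_ofFn_succ, LsNest, intervalIntegral.integral_comp_add_right
            (fun θ => θ ^ lN * A θ ^ (kN - 1 - lN) * LsNest c rest θ), zero_add, add_comm]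
      _ = ∑ q, coef q * LsNest 0 ((kN - q.1, lN - q.1) :: restJ q.2) σ := by
          simp_rw [hpoint]
          exact integral_sum_mul_LsNest 0 σ coef (fun q => (kN - q.1, lN - q.1))
            (fun q => restJ q.2)
      _ = _ := by
          rw [← (Fin.snocEquiv fun u => Fin (l u + 1)).sum_comp]
          refine Finset.sum_congr rfl fun q _ => ?_
          rw [List.reverse_ofFn_succ]
          simp only [coef, restJ, Fin.snocEquiv_apply, Fin.snoc_castSucc, Fin.snoc_last,
            Fin.sum_univ_castSucc, Fin.prod_univ_castSucc]
          ring

theorem stmt2_general (m : ℤ) (σ : ℝ) (n : ℕ) (k l : Fin n → ℕ) :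
    Ls k l (2 * m * π) (2 * m * π + σ) =
      ∑ j : (u : Fin n) → Fin (l u + 1),
        (2 * m * π) ^ (∑ u, (j u : ℕ)) * (∏ u, (Nat.choose (l u) (j u) : ℝ)) *
          Ls (fun u => k u - j u) (fun u => l u - j u) 0 σ := by
  have hperiod : Function.Periodic A (2 * m * π) := by
    simpa only [mul_comm, mul_left_comm] using A_periodic.int_mul m
  rw [Ls, LsNest_shift hperiod, Finset.mul_sum]
  exact Finset.sum_congr rfl fun j _ => by rw [Ls]; ring

/-- Shift formula: `Ls_k^l(2mπ, 2mπ+σ) = Σ_{j ≤ l} (2mπ)^{|j|} binom(l,j) Ls_{k-j}^{l-j}(σ)`. -/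
theorem stmt2 (m : ℤ) (σ : ℝ) (n : ℕ) (k l : Fin n → ℕ) (hk : ∀ u, 1 ≤ k u) :
    Ls k l (2 * m * π) (2 * m * π + σ) =
      ∑ j : (u : Fin n) → Fin (l u + 1),
        (2 * m * π) ^ (∑ u, (j u : ℕ)) * (∏ u, (Nat.choose (l u) (j u) : ℝ)) *
          Ls (fun u => k u - j u) (fun u => l u - j u) 0 σ :=
  stmt2_general m σ n k l
end

section
/- For σ ∈ [0, 2π], Ls₃^{(1)}(σ) = -(i/4)πσ² + (i/6)σ³ - iσ Li₂(e^{iσ}) - ζ(3) + Li₃(e^{iσ}). -/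
/-!
For `0 ≤ r < 1`, expanding `-log ‖1 - r e^{it}‖ = Σ rⁿ cos (nt) / n` and integrating against `t`
term by term gives `-∫₀^σ t log ‖1 - r e^{it}‖ dt = Σ aₙ rⁿ` with
`aₙ = σ sin (nσ) / n² + cos (nσ) / n³ - 1 / n³`. As `r → 1⁻` the left side converges by dominated
convergence, since `‖1 - r z‖² = (1 - r)² + r ‖1 - z‖²` on the unit circle, and the right side by
Abel's theorem. This identifies the real part of the claim; its imaginary part vanishes by the
Bernoulli-polynomial closed forms of `Σ cos (nσ) / n²` and `Σ sin (nσ) / n³` on `[0, 2π]`.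
-/

open Complex Real

/-- The polylogarithm `Li_k(z) = Σ_{m≥1} z^m/m^k`. -/
noncomputable def Li (k : ℕ) (z : ℂ) : ℂ := ∑' m : ℕ+, z ^ (m : ℕ) / (m : ℂ) ^ k

open MeasureTheory Filter Set Topology

noncomputable def cosSeries (k : ℕ) (σ : ℝ) : ℝ := ∑' n : ℕ, Real.cos (n * σ) / (n : ℝ) ^ k

noncomputable def sinSeries (k : ℕ) (σ : ℝ) : ℝ := ∑' n : ℕ, Real.sin (n * σ) / (n : ℝ) ^ k

lemma summable_div_pow_of_abs_le_one {k : ℕ} (hk : 1 < k) {f : ℕ → ℝ} (hf : ∀ n, |f n| ≤ 1) :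
    Summable fun n : ℕ => f n / (n : ℝ) ^ k := by
  refine (Real.summable_one_div_nat_pow.mpr hk).of_norm_bounded fun n => ?_
  rw [Real.norm_eq_abs, abs_div, abs_of_nonneg (by positivity : (0 : ℝ) ≤ (n : ℝ) ^ k)]
  exact div_le_div_of_nonneg_right (hf n) (by positivity)

lemma summable_cos_div_pow {k : ℕ} (hk : 1 < k) (σ : ℝ) :
    Summable fun n : ℕ => Real.cos (n * σ) / (n : ℝ) ^ k :=
  summable_div_pow_of_abs_le_one hk fun _ => abs_cos_le_one _

lemma summable_sin_div_pow {k : ℕ} (hk : 1 < k) (σ : ℝ) :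
    Summable fun n : ℕ => Real.sin (n * σ) / (n : ℝ) ^ k :=
  summable_div_pow_of_abs_le_one hk fun _ => abs_sin_le_one _

lemma Li_eq_tsum_nat {k : ℕ} (hk : k ≠ 0) (z : ℂ) : Li k z = ∑' n : ℕ, z ^ n / (n : ℂ) ^ k :=
  tsum_pnat_eq_tsum_of_eq_zero (f := fun n : ℕ => z ^ n / (n : ℂ) ^ k) (by simp [hk])

lemma Li_exp_mul_I {k : ℕ} (hk : 1 < k) (σ : ℝ) :
    Li k (exp (σ * I)) = cosSeries k σ + sinSeries k σ * I := by
  have hterm : ∀ n : ℕ, exp (σ * I) ^ n / (n : ℂ) ^ k =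
      ((Real.cos (n * σ) / (n : ℝ) ^ k : ℝ) : ℂ) +
        ((Real.sin (n * σ) / (n : ℝ) ^ k : ℝ) : ℂ) * I := by
    intro n
    rw [← Complex.exp_nat_mul, ← mul_assoc, ← ofReal_natCast, ← ofReal_mul, exp_mul_I,
      ← ofReal_cos, ← ofReal_sin]
    push_cast
    ring
  rw [Li_eq_tsum_nat (by omega), tsum_congr hterm]
  exact ((hasSum_ofReal.mpr (summable_cos_div_pow hk σ).hasSum).add
    ((hasSum_ofReal.mpr (summable_sin_div_pow hk σ).hasSum).mul_right I)).tsum_eq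

lemma Li_one {k : ℕ} (hk : 1 < k) : Li k 1 = cosSeries k 0 := by
  simpa [sinSeries] using Li_exp_mul_I hk 0

lemma div_two_pi_mem_Icc {σ : ℝ} (h0 : 0 ≤ σ) (h2 : σ ≤ 2 * π) : σ / (2 * π) ∈ Icc (0 : ℝ) 1 :=
  ⟨by positivity, (div_le_one (by positivity)).mpr h2⟩

lemma cosSeries_two {σ : ℝ} (h0 : 0 ≤ σ) (h2 : σ ≤ 2 * π) :
    cosSeries 2 σ = π ^ 2 / 6 - π * σ / 2 + σ ^ 2 / 4 := by
  have h := hasSum_one_div_nat_pow_mul_cos one_ne_zero (div_two_pi_mem_Icc h0 h2)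
  rw [cosSeries]
  convert h.tsum_eq using 1
  · congr 1 with n
    rw [show 2 * π * n * (σ / (2 * π)) = n * σ by field_simp]
    ring
  · rw [← bernoulliFun]
    simp only [Nat.reduceMul, Nat.reduceAdd, Nat.factorial, bernoulliFun_two]
    field_simp
    ring

lemma bernoulliFun_three (x : ℝ) : bernoulliFun 3 x = x ^ 3 - 3 / 2 * x ^ 2 + x / 2 := by
  simp [bernoulliFun, Polynomial.bernoulli_def, Finset.sum_range_succ,
    bernoulli_eq_zero_of_odd (show Odd 3 by decide)]
  ring

lemma sinSeries_three {σ : ℝ} (h0 : 0 ≤ σ) (h2 : σ ≤ 2 * π) :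
    sinSeries 3 σ = π ^ 2 * σ / 6 - π * σ ^ 2 / 4 + σ ^ 3 / 12 := by
  have h := hasSum_one_div_nat_pow_mul_sin one_ne_zero (div_two_pi_mem_Icc h0 h2)
  rw [sinSeries]
  convert h.tsum_eq using 1
  · congr 1 with n
    rw [show 2 * π * n * (σ / (2 * π)) = n * σ by field_simp]
    ring
  · rw [← bernoulliFun]
    simp only [Nat.reduceMul, Nat.reduceAdd, Nat.factorial, bernoulliFun_three]
    field_simp
    ring

lemma norm_one_sub_exp_mul_I (θ : ℝ) : ‖1 - exp (θ * I)‖ = |2 * Real.sin (θ / 2)| := by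
  rw [norm_sub_rev, mul_comm, norm_exp_I_mul_ofReal_sub_one, Real.norm_eq_abs]

lemma intervalIntegrable_log_norm_one_sub_exp_mul_I (a b : ℝ) :
    IntervalIntegrable (fun t : ℝ => Real.log ‖1 - exp (t * I)‖) volume a b := by
  simp_rw [norm_one_sub_exp_mul_I, ← Real.norm_eq_abs]
  refine AnalyticOnNhd.meromorphicOn ?_ |>.intervalIntegrable_log_norm
  intro t _
  fun_prop

lemma ae_exp_mul_I_ne_one : ∀ᵐ t : ℝ, exp (t * I) ≠ 1 := by
  have hcount : {t : ℝ | exp (t * I) = 1}.Countable := by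
    refine (countable_range fun n : ℤ => 2 * π * n).mono fun t ht => ?_
    obtain ⟨n, hn⟩ := Complex.exp_eq_one_iff.mp ht
    refine ⟨n, ofReal_injective ?_⟩
    push_cast
    linear_combination I * hn - (t - 2 * π * n) * I_sq
  exact ae_iff.mpr (by simpa using hcount.measure_zero volume)

lemma sq_norm_one_sub_ofReal_mul {z : ℂ} (hz : ‖z‖ = 1) (r : ℝ) :
    ‖1 - r * z‖ ^ 2 = (1 - r) ^ 2 + r * ‖1 - z‖ ^ 2 := by
  have hz2 : z.re * z.re + z.im * z.im = 1 := by
    rw [← normSq_apply, ← Complex.sq_norm, hz, one_pow]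
  simp only [Complex.sq_norm, normSq_apply, sub_re, sub_im, one_re, one_im, mul_re, mul_im,
    ofReal_re, ofReal_im]
  linear_combination (r ^ 2 - r) * hz2

lemma abs_log_norm_one_sub_ofReal_mul_le {z : ℂ} (hz : ‖z‖ = 1) (hz1 : z ≠ 1) {r : ℝ}
    (hr : 1 / 2 ≤ r) (hr1 : r ≤ 1) : |Real.log ‖1 - r * z‖| ≤ |Real.log ‖1 - z‖| + 1 := by
  have hpos : 0 < ‖1 - z‖ := norm_pos_iff.mpr (sub_ne_zero.mpr hz1.symm)
  have hupper : ‖1 - r * z‖ ≤ 2 := by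
    calc ‖1 - r * z‖ ≤ ‖(1 : ℂ)‖ + ‖(r : ℂ) * z‖ := norm_sub_le _ _
      _ ≤ 2 := by
        rw [norm_one, norm_mul, hz, mul_one, norm_real, Real.norm_eq_abs,
          abs_of_nonneg (by linarith)]
        linarith
  have hlower : ‖1 - z‖ / 2 ≤ ‖1 - r * z‖ := by
    refine le_of_pow_le_pow_left₀ two_ne_zero (norm_nonneg _) ?_
    rw [sq_norm_one_sub_ofReal_mul hz r]
    nlinarith [sq_nonneg (1 - r), sq_nonneg ‖1 - z‖]
  have hlog2 : Real.log 2 ≤ 1 := by linarith [Real.log_two_lt_d9]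
  have h1 : Real.log ‖1 - r * z‖ ≤ 1 :=
    (Real.log_le_log (by linarith) hupper).trans hlog2
  have h2 : Real.log ‖1 - z‖ - 1 ≤ Real.log ‖1 - r * z‖ := by
    have := Real.log_le_log (by positivity) hlower
    rw [Real.log_div hpos.ne' two_ne_zero] at this
    linarith
  rw [abs_le]
  constructor <;> linarith [neg_abs_le (Real.log ‖1 - z‖), abs_nonneg (Real.log ‖1 - z‖)]

lemma hasSum_pow_mul_cos_div {r : ℝ} (hr : |r| < 1) (θ : ℝ) :
    HasSum (fun n : ℕ => r ^ n * Real.cos (n * θ) / n) (-Real.log ‖1 - r * exp (θ * I)‖) := by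
  have hz : ‖(r : ℂ) * exp (θ * I)‖ < 1 := by
    rwa [norm_mul, norm_exp_ofReal_mul_I, mul_one, norm_real, Real.norm_eq_abs]
  have h := hasSum_re (hasSum_taylorSeries_neg_log hz)
  rw [neg_re, log_re] at h
  convert h using 2 with n
  rw [mul_pow, ← Complex.exp_nat_mul, ← mul_assoc, ← ofReal_natCast, ← ofReal_mul, ← ofReal_pow,
    div_ofReal_re, re_ofReal_mul, exp_ofReal_mul_I_re]

lemma integral_mul_cos_mul {m : ℝ} (hm : m ≠ 0) (σ : ℝ) :
    ∫ t in (0 : ℝ)..σ, t * Real.cos (m * t) =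
      σ * Real.sin (m * σ) / m + Real.cos (m * σ) / m ^ 2 - 1 / m ^ 2 := by
  have hderiv : ∀ t : ℝ, HasDerivAt (fun t => t * Real.sin (m * t) / m + Real.cos (m * t) / m ^ 2)
      (t * Real.cos (m * t)) t := by
    intro t
    have hmt : HasDerivAt (fun t : ℝ => m * t) m t := by simpa using (hasDerivAt_id t).const_mul m
    refine ((((hasDerivAt_id t).mul hmt.sin).div_const m).add
      (hmt.cos.div_const (m ^ 2))).congr_deriv ?_
    simp only [id]
    field_simp
    ring
  rw [intervalIntegral.integral_eq_sub_of_hasDerivAt (fun t _ => hderiv t)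
    (Continuous.intervalIntegrable (by fun_prop) _ _)]
  simp

lemma abs_div_natCast_le (x : ℝ) (n : ℕ) : |x / n| ≤ |x| := by
  rcases eq_or_ne n 0 with rfl | hn
  · simp
  · rw [abs_div, Nat.abs_cast]
    exact div_le_self (abs_nonneg x) (Nat.one_le_cast.mpr (Nat.one_le_iff_ne_zero.mpr hn))

lemma abs_le_abs_of_mem_uIoc_zero {t σ : ℝ} (ht : t ∈ uIoc 0 σ) : |t| ≤ |σ| := by
  simpa using abs_sub_left_of_mem_uIcc (uIoc_subset_uIcc ht)

noncomputable def logMomentCoeff (σ : ℝ) (n : ℕ) : ℝ :=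
  σ * (Real.sin (n * σ) / n ^ 2) + Real.cos (n * σ) / n ^ 3 - 1 / n ^ 3

lemma integral_mul_pow_mul_cos_div (r σ : ℝ) (n : ℕ) :
    ∫ t in (0 : ℝ)..σ, t * (r ^ n * Real.cos (n * t) / n) = logMomentCoeff σ n * r ^ n := by
  rcases eq_or_ne n 0 with rfl | hn
  · simp [logMomentCoeff]
  have hn' : (n : ℝ) ≠ 0 := Nat.cast_ne_zero.mpr hn
  simp_rw [mul_div_assoc, mul_left_comm _ (r ^ n)]
  rw [intervalIntegral.integral_const_mul]
  simp_rw [mul_div_assoc', intervalIntegral.integral_div, integral_mul_cos_mul hn', logMomentCoeff]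
  field_simp

lemma hasSum_integral_mul_log_norm_one_sub_mul_exp {r : ℝ} (hr : |r| < 1) (σ : ℝ) :
    HasSum (fun n : ℕ => logMomentCoeff σ n * r ^ n)
      (-∫ t in (0 : ℝ)..σ, t * Real.log ‖1 - r * exp (t * I)‖) := by
  have H := intervalIntegral.hasSum_integral_of_dominated_convergence (μ := volume) (a := 0)
    (b := σ) (F := fun (n : ℕ) (t : ℝ) => t * (r ^ n * Real.cos (n * t) / n))
    (f := fun t => t * -Real.log ‖1 - r * exp (t * I)‖)
    (fun n _ => |σ| * |r| ^ n) (fun n => by fun_prop) ?_ ?_ intervalIntegrable_const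
    (.of_forall fun t _ => (hasSum_pow_mul_cos_div hr t).mul_left t)
  · simpa only [integral_mul_pow_mul_cos_div, mul_neg, intervalIntegral.integral_neg] using H
  · refine fun n => .of_forall fun t ht => ?_
    rw [norm_mul, Real.norm_eq_abs]
    refine mul_le_mul (abs_le_abs_of_mem_uIoc_zero ht) ?_ (abs_nonneg _) (abs_nonneg _)
    refine (abs_div_natCast_le _ n).trans ?_
    rw [abs_mul, abs_pow]
    exact mul_le_of_le_one_right (by positivity) (abs_cos_le_one _)
  · exact .of_forall fun t _ => (summable_geometric_of_lt_one (abs_nonneg r) hr).mul_left _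

lemma tendsto_integral_mul_log_norm_one_sub_mul_exp (σ : ℝ) :
    Tendsto (fun r : ℝ => ∫ t in (0 : ℝ)..σ, t * Real.log ‖1 - r * exp (t * I)‖) (𝓝[<] 1)
      (𝓝 (∫ t in (0 : ℝ)..σ, t * Real.log ‖1 - exp (t * I)‖)) := by
  refine intervalIntegral.tendsto_integral_filter_of_dominated_convergence
    (fun t => |σ| * (|Real.log ‖1 - exp (t * I)‖| + 1)) (.of_forall fun r => by fun_prop) ?_
    (((intervalIntegrable_log_norm_one_sub_exp_mul_I 0 σ).abs.add
      intervalIntegrable_const).const_mul _) ?_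
  · filter_upwards [Ioo_mem_nhdsLT (show (1 / 2 : ℝ) < 1 by norm_num)] with r hr
    filter_upwards [ae_exp_mul_I_ne_one] with t ht htσ
    rw [norm_mul, Real.norm_eq_abs]
    exact mul_le_mul (abs_le_abs_of_mem_uIoc_zero htσ)
      (abs_log_norm_one_sub_ofReal_mul_le (norm_exp_ofReal_mul_I t) ht hr.1.le hr.2.le)
      (abs_nonneg _) (abs_nonneg _)
  · filter_upwards [ae_exp_mul_I_ne_one] with t ht _
    have hne : ‖1 - (1 : ℝ) * exp (t * I)‖ ≠ 0 := by
      simpa [sub_eq_zero] using ht.symm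
    have hcont : ContinuousAt (fun r : ℝ => t * Real.log ‖1 - r * exp (t * I)‖) 1 :=
      continuousAt_const.mul (ContinuousAt.log (by fun_prop) hne)
    simpa using hcont.tendsto.mono_left nhdsWithin_le_nhds

lemma integral_mul_log_norm_one_sub_exp (σ : ℝ) :
    ∫ t in (0 : ℝ)..σ, t * Real.log ‖1 - exp (t * I)‖ =
      -(σ * sinSeries 2 σ + cosSeries 3 σ - cosSeries 3 0) := by
  have hseries : HasSum (logMomentCoeff σ) (σ * sinSeries 2 σ + cosSeries 3 σ - cosSeries 3 0) := by
    refine ((summable_sin_div_pow one_lt_two σ).hasSum.mul_left σ |>.add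
      (summable_cos_div_pow (by norm_num) σ).hasSum).sub ?_
    simpa [cosSeries] using (summable_cos_div_pow (by norm_num : 1 < 3) 0).hasSum
  have habel := Real.tendsto_tsum_powerSeries_nhdsWithin_lt hseries.tendsto_sum_nat
  have hpower : ∀ᶠ r in 𝓝[<] (1 : ℝ), ∑' n : ℕ, logMomentCoeff σ n * r ^ n =
      -∫ t in (0 : ℝ)..σ, t * Real.log ‖1 - r * exp (t * I)‖ := by
    filter_upwards [Ioo_mem_nhdsLT (show (-1 : ℝ) < 1 by norm_num)] with r hr
    exact (hasSum_integral_mul_log_norm_one_sub_mul_exp (abs_lt.mpr hr) σ).tsum_eq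
  have := tendsto_nhds_unique (habel.congr' hpower)
    (tendsto_integral_mul_log_norm_one_sub_mul_exp σ).neg
  linarith

/-- For `σ ∈ [0,2π]`,
`Ls₃^{(1)}(σ) = -(i/4)πσ² + (i/6)σ³ - iσ Li₂(e^{iσ}) - ζ(3) + Li₃(e^{iσ})`. -/
theorem stmt8 (σ : ℝ) (h0 : 0 ≤ σ) (h2 : σ ≤ 2 * π) :
    ((-(∫ θ in (0:ℝ)..σ, θ * Real.log |2 * Real.sin (θ / 2)|) : ℝ) : ℂ) =
      -(Complex.I / 4) * π * σ ^ 2 + Complex.I / 6 * σ ^ 3 -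
        Complex.I * σ * Li 2 (Complex.exp (σ * Complex.I)) - Li 3 1 +
        Li 3 (Complex.exp (σ * Complex.I)) := by
  simp_rw [← norm_one_sub_exp_mul_I]
  rw [integral_mul_log_norm_one_sub_exp, Li_exp_mul_I one_lt_two, Li_exp_mul_I (by norm_num),
    Li_one (by norm_num), cosSeries_two h0 h2, sinSeries_three h0 h2]
  push_cast
  linear_combination (σ * sinSeries 2 σ : ℂ) * I_sq
end

section
/- Let |L^o_{k,d}| and |L^e_{k,d}| count tuples (k₁,…,k_n; l₁,…,l_n) with 0 ≤ n ≤ k, k₁+⋯+k_n = k, k_u ≥ 1, l_u ≥ 0, k_u - 1 - l_u ≥ 0 for all u, and Σ_u (k_u - 1 - l_u) ≤ d with that sum odd (resp. even). Then |L^o_{0,0}| = 0, |L^e_{0,0}| = 1, and for k ≥ 1: |L^o_{k,k}| = (F_{2k} - F_k)/2 and |L^e_{k,k}| = (F_{2k} + F_k)/2, where F_n is the n-th Fibonacci number. -/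
/-- `Lodd k d` counts tuples `((k₁,l₁),…,(k_n,l_n))` with `n ≤ k`, `Σ k_u = k`,
`k_u ≥ 1`, `k_u - 1 - l_u ≥ 0`, `Σ (k_u - 1 - l_u) ≤ d` and that sum odd. -/
noncomputable def Lodd (k d : ℕ) : ℕ :=
  Nat.card {P : List (ℕ × ℕ) //
    P.length ≤ k ∧ (P.map Prod.fst).sum = k ∧ (∀ p ∈ P, p.2 + 1 ≤ p.1) ∧
    (P.map fun p => p.1 - 1 - p.2).sum ≤ d ∧ Odd (P.map fun p => p.1 - 1 - p.2).sum}

/-- Even counterpart of `Lodd`. -/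
noncomputable def Leven (k d : ℕ) : ℕ :=
  Nat.card {P : List (ℕ × ℕ) //
    P.length ≤ k ∧ (P.map Prod.fst).sum = k ∧ (∀ p ∈ P, p.2 + 1 ≤ p.1) ∧
    (P.map fun p => p.1 - 1 - p.2).sum ≤ d ∧ Even (P.map fun p => p.1 - 1 - p.2).sum}

def LF : ℕ → Finset (List (ℕ × ℕ))
  | 0 => {[]}
  | (n+1) => (Finset.range (n+1)).biUnion fun a =>
      (Finset.range (a+1)).biUnion fun b =>
        (LF (n - a)).image (fun t => ((a+1, b) :: t))
  decreasing_by exact Nat.lt_succ_of_le (Nat.sub_le n a)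

lemma mem_LF : ∀ (k : ℕ) (P : List (ℕ × ℕ)),
    P ∈ LF k ↔ (P.map Prod.fst).sum = k ∧ ∀ p ∈ P, p.2 + 1 ≤ p.1 := by
  intro k
  induction k using Nat.strong_induction_on with
  | _ k ih =>
    intro P
    match k with
    | 0 =>
      simp only [LF, Finset.mem_singleton]
      constructor
      · rintro rfl; simp
      · rintro ⟨hs, hp⟩
        cases P with
        | nil => rfl
        | cons p t =>
          exfalso
          have := hp p (by simp)
          simp at hs
          omega
    | (n+1) =>
      rw [LF]
      simp only [Finset.mem_biUnion, Finset.mem_range, Finset.mem_image]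
      constructor
      · rintro ⟨a, ha, b, hb, t, ht, rfl⟩
        rw [ih (n - a) (by omega)] at ht
        obtain ⟨hs, hp⟩ := ht
        constructor
        · simp [hs]; omega
        · rintro p hp'
          rcases List.mem_cons.1 hp' with rfl | h
          · simp; omega
          · exact hp p h
      · rintro ⟨hs, hp⟩
        cases P with
        | nil => simp at hs
        | cons p t =>
          obtain ⟨c, d⟩ := p
          have hc : d + 1 ≤ c := hp (c, d) (by simp)
          simp only [List.map_cons, List.sum_cons] at hs
          refine ⟨c - 1, by omega, d, by omega, t, ?_, by simp; omega⟩
          rw [ih (n - (c-1)) (by omega)]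
          exact ⟨by omega, fun q hq => hp q (List.mem_cons_of_mem _ hq)⟩

def wt (P : List (ℕ × ℕ)) : ℕ := (P.map fun p => p.1 - 1 - p.2).sum

lemma aux1 (P : List (ℕ × ℕ)) (h : ∀ p ∈ P, p.2 + 1 ≤ p.1) :
    P.length ≤ (P.map Prod.fst).sum ∧ wt P ≤ (P.map Prod.fst).sum := by
  induction P with
  | nil => simp [wt]
  | cons p t ih =>
    have h1 := h p (by simp)
    have h2 := ih (fun q hq => h q (List.mem_cons_of_mem _ hq))
    simp only [wt, List.map_cons, List.sum_cons, List.length_cons] at *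
    omega

noncomputable def oc (k : ℕ) : ℕ := ((LF k).filter fun P => Odd (wt P)).card
noncomputable def ec (k : ℕ) : ℕ := ((LF k).filter fun P => Even (wt P)).card

lemma Lodd_eq (k : ℕ) : Lodd k k = oc k := by
  rw [Lodd, oc]
  rw [Nat.card_congr (Equiv.subtypeEquivRight
    (q := fun P => P ∈ (LF k).filter fun P => Odd (wt P)) ?_)]
  · exact Nat.card_eq_fintype_card.trans (Fintype.card_coe _)
  · intro P
    simp only [Finset.mem_filter, mem_LF]
    constructor
    · rintro ⟨_, h2, h3, _, h5⟩; exact ⟨⟨h2, h3⟩, h5⟩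
    · rintro ⟨⟨h2, h3⟩, h5⟩
      have := aux1 P h3
      exact ⟨by omega, h2, h3, by rw [← wt]; omega, h5⟩

lemma Leven_eq (k : ℕ) : Leven k k = ec k := by
  rw [Leven, ec]
  rw [Nat.card_congr (Equiv.subtypeEquivRight
    (q := fun P => P ∈ (LF k).filter fun P => Even (wt P)) ?_)]
  · exact Nat.card_eq_fintype_card.trans (Fintype.card_coe _)
  · intro P
    simp only [Finset.mem_filter, mem_LF]
    constructor
    · rintro ⟨_, h2, h3, _, h5⟩; exact ⟨⟨h2, h3⟩, h5⟩
    · rintro ⟨⟨h2, h3⟩, h5⟩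
      have := aux1 P h3
      exact ⟨by omega, h2, h3, by rw [← wt]; omega, h5⟩

lemma cnt_rec (q : ℕ → Prop) [DecidablePred q] (n : ℕ) :
    ((LF (n+1)).filter fun P => q (wt P)).card
      = ∑ a ∈ Finset.range (n+1), ∑ b ∈ Finset.range (a+1),
          ((LF (n-a)).filter fun t => q ((a-b) + wt t)).card := by
  rw [LF, Finset.filter_biUnion]
  rw [Finset.card_biUnion ?hdisj]
  case hdisj =>
    intro a₁ _ a₂ _ hne
    simp only [Finset.disjoint_left, Finset.mem_filter, Finset.mem_biUnion, Finset.mem_image,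
      Finset.mem_range]
    rintro P ⟨⟨b₁, _, t₁, _, rfl⟩, _⟩ ⟨⟨b₂, _, t₂, _, heq⟩, _⟩
    exact hne (by simp only [List.cons.injEq, Prod.mk.injEq] at heq; omega)
  refine Finset.sum_congr rfl fun a _ => ?_
  rw [Finset.filter_biUnion]
  rw [Finset.card_biUnion ?hdisj2]
  case hdisj2 =>
    intro b₁ _ b₂ _ hne
    simp only [Finset.disjoint_left, Finset.mem_filter, Finset.mem_image]
    rintro P ⟨⟨t₁, _, rfl⟩, _⟩ ⟨⟨t₂, _, heq⟩, _⟩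
    exact hne (by simp only [List.cons.injEq, Prod.mk.injEq] at heq; omega)
  refine Finset.sum_congr rfl fun b _ => ?_
  have hinj : Function.Injective (fun t : List (ℕ × ℕ) => ((a+1, b) :: t)) :=
    fun t₁ t₂ h => by injection h
  rw [Finset.filter_image, Finset.card_image_of_injective _ hinj]
  have hwt : ∀ t : List (ℕ × ℕ), wt ((a+1, b) :: t) = (a - b) + wt t := by
    intro t; simp [wt]
  simp only [Function.comp, hwt]

lemma oc_zero : oc 0 = 0 := by
  rw [oc, LF, Finset.filter_singleton]
  norm_num [wt]

lemma ec_zero : ec 0 = 1 := by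
  rw [ec, LF, Finset.filter_singleton]
  norm_num [wt]

lemma ifsum (x y : ℕ) : ∀ a : ℕ,
    ∑ m ∈ Finset.range (a+1), (if Odd m then x else y) = ((a+1)/2) * x + (a/2+1) * y := by
  intro a
  induction a with
  | zero => simp
  | succ a ih =>
    rw [Finset.sum_range_succ, ih]
    rcases Nat.even_or_odd a with he | ho
    · rw [if_pos (by simp [Nat.even_iff, Nat.odd_iff] at *; omega)]
      obtain ⟨c, rfl⟩ := he
      have e1 : (c+c+1)/2 = c := by omega
      have e2 : (c+c)/2 = c := by omega
      have e3 : (c+c+1+1)/2 = c+1 := by omega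
      rw [e1, e2, e3]; ring
    · rw [if_neg (by simp [Nat.even_iff, Nat.odd_iff] at *; omega)]
      obtain ⟨c, rfl⟩ := ho
      have e1 : (2*c+1+1)/2 = c+1 := by omega
      have e2 : (2*c+1)/2 = c := by omega
      have e3 : (2*c+1+1+1)/2 = c+1 := by omega
      rw [e1, e2, e3]; ring

lemma oc_rec (n : ℕ) : oc (n+1) =
    ∑ a ∈ Finset.range (n+1), (((a+1)/2) * ec (n-a) + (a/2+1) * oc (n-a)) := by
  rw [oc, cnt_rec]
  refine Finset.sum_congr rfl fun a _ => ?_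
  have hcard : ∀ m, ((LF (n-a)).filter fun t => Odd (m + wt t)).card
      = if Odd m then ec (n-a) else oc (n-a) := by
    intro m
    rcases Nat.even_or_odd m with hm | hm
    · rw [if_neg (by simp [Nat.even_iff, Nat.odd_iff] at *; omega), oc]
      refine congrArg Finset.card (Finset.filter_congr fun t _ => ?_)
      simp only [Nat.even_iff, Nat.odd_iff] at *
      omega
    · rw [if_pos hm, ec]
      refine congrArg Finset.card (Finset.filter_congr fun t _ => ?_)
      simp only [Nat.even_iff, Nat.odd_iff] at *
      omega
  simp only [hcard]
  have step : ∀ b ∈ Finset.range (a+1),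
      (if Odd (a-b) then ec (n-a) else oc (n-a))
        = (if Odd (a+1-1-b) then ec (n-a) else oc (n-a)) := by
    intro b hb
    rw [show a+1-1-b = a-b by omega]
  rw [Finset.sum_congr rfl step,
    Finset.sum_range_reflect (fun m => if Odd m then ec (n-a) else oc (n-a)) (a+1), ifsum]

lemma ec_rec (n : ℕ) : ec (n+1) =
    ∑ a ∈ Finset.range (n+1), (((a+1)/2) * oc (n-a) + (a/2+1) * ec (n-a)) := by
  rw [ec, cnt_rec]
  refine Finset.sum_congr rfl fun a _ => ?_
  have hcard : ∀ m, ((LF (n-a)).filter fun t => Even (m + wt t)).card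
      = if Odd m then oc (n-a) else ec (n-a) := by
    intro m
    rcases Nat.even_or_odd m with hm | hm
    · rw [if_neg (by simp [Nat.even_iff, Nat.odd_iff] at *; omega), ec]
      refine congrArg Finset.card (Finset.filter_congr fun t _ => ?_)
      simp only [Nat.even_iff, Nat.odd_iff] at *
      omega
    · rw [if_pos hm, oc]
      refine congrArg Finset.card (Finset.filter_congr fun t _ => ?_)
      simp only [Nat.even_iff, Nat.odd_iff] at *
      omega
  simp only [hcard]
  have step : ∀ b ∈ Finset.range (a+1),
      (if Odd (a-b) then oc (n-a) else ec (n-a))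
        = (if Odd (a+1-1-b) then oc (n-a) else ec (n-a)) := by
    intro b hb
    rw [show a+1-1-b = a-b by omega]
  rw [Finset.sum_congr rfl step,
    Finset.sum_range_reflect (fun m => if Odd m then oc (n-a) else ec (n-a)) (a+1), ifsum]

def T (k : ℕ) : ℕ := if k = 0 then 1 else Nat.fib (2*k)
def D (k : ℕ) : ℕ := if k = 0 then 1 else Nat.fib k

lemma sumT (n : ℕ) : ∑ j ∈ Finset.range (n+1), T j = Nat.fib (2*n+1) := by
  induction n with
  | zero => simp [T]
  | succ n ih =>
    rw [Finset.sum_range_succ, ih, T, if_neg (by omega),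
      show 2*(n+1)+1 = (2*n+1)+2 by ring, Nat.fib_add_two,
      show 2*(n+1) = (2*n+1)+1 by ring]

lemma Glem (n : ℕ) : ∑ j ∈ Finset.range (n+1), (n+1-j) * T j = Nat.fib (2*n+2) := by
  induction n with
  | zero => simp [T]
  | succ n ih =>
    have step : ∀ j ∈ Finset.range (n+2), (n+2-j) * T j = (n+1-j) * T j + T j := by
      intro j hj
      simp only [Finset.mem_range] at hj
      have : n+2-j = (n+1-j) + 1 := by omega
      rw [this]; ring
    rw [Finset.sum_congr rfl step, Finset.sum_add_distrib, sumT (n+1),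
      Finset.sum_range_succ, Nat.sub_self, zero_mul, add_zero, ih,
      show 2*(n+1)+1 = (2*n+2)+1 by ring, show 2*(n+1)+2 = (2*n+2)+2 by ring]
    exact (Nat.fib_add_two).symm

lemma Klem : ∀ n : ℕ, ∑ a ∈ Finset.range (n+1), (if Even a then D (n-a) else 0) = Nat.fib (n+1)
  | 0 => by
    rw [Finset.sum_range_succ, Finset.sum_range_zero]
    norm_num [D]
  | 1 => by
    rw [Finset.sum_range_succ, Finset.sum_range_succ, Finset.sum_range_zero]
    norm_num [D]
  | (n+2) => by
    rw [Finset.sum_range_succ', Finset.sum_range_succ']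
    have h1 : ∀ i, (if Even (i+1+1) then D (n+2-(i+1+1)) else 0)
        = (if Even i then D (n-i) else 0) := by
      intro i
      have : Even (i+1+1) ↔ Even i := by
        simp [Nat.even_add_one, Nat.not_even_iff_odd, Nat.odd_add_one]
      have harg : n+2-(i+1+1) = n-i := by omega
      simp only [this, harg]
    simp only [h1]
    rw [Klem n]
    have fib3 : Nat.fib (n+3) = Nat.fib (n+1) + Nat.fib (n+2) := by
      rw [show n+3 = (n+1)+2 by omega, Nat.fib_add_two, show n+1+1 = n+2 by omega]
    rw [show n+2+1 = n+3 by omega, fib3]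
    norm_num [D]

lemma main : ∀ k : ℕ, ec k + oc k = T k ∧ ec k = oc k + D k := by
  intro k
  induction k using Nat.strong_induction_on with
  | _ k ih =>
    match k with
    | 0 => simp [oc_zero, ec_zero, T, D]
    | (n+1) =>
      have ihT : ∀ a, a ≤ n → ec (n-a) + oc (n-a) = T (n-a) :=
        fun a ha => (ih (n-a) (by omega)).1
      have ihD : ∀ a, a ≤ n → ec (n-a) = oc (n-a) + D (n-a) :=
        fun a ha => (ih (n-a) (by omega)).2
      constructor
      · rw [oc_rec, ec_rec, ← Finset.sum_add_distrib]
        have step : ∀ a ∈ Finset.range (n+1),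
            (((a+1)/2) * oc (n-a) + (a/2+1) * ec (n-a))
              + (((a+1)/2) * ec (n-a) + (a/2+1) * oc (n-a))
            = (a+1) * T (n-a) := by
          intro a ha
          simp only [Finset.mem_range] at ha
          rw [← ihT a (by omega)]
          have h2 : (a+1)/2 + (a/2+1) = a+1 := by omega
          calc (((a+1)/2) * oc (n-a) + (a/2+1) * ec (n-a))
              + (((a+1)/2) * ec (n-a) + (a/2+1) * oc (n-a))
              = ((a+1)/2 + (a/2+1)) * (ec (n-a) + oc (n-a)) := by ring
            _ = (a+1) * (ec (n-a) + oc (n-a)) := by rw [h2]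
        rw [Finset.sum_congr rfl step, T, if_neg (by omega)]
        rw [← Finset.sum_range_reflect]
        have step2 : ∀ j ∈ Finset.range (n+1),
            (n+1-1-j+1) * T (n-(n+1-1-j)) = (n+1-j) * T j := by
          intro j hj
          simp only [Finset.mem_range] at hj
          have h1 : n+1-1-j+1 = n+1-j := by omega
          have h2 : n-(n+1-1-j) = j := by omega
          rw [h1, h2]
        rw [Finset.sum_congr rfl step2, Glem n, show 2*(n+1) = 2*n+2 by ring]
      · have key : ec (n+1) + ∑ a ∈ Finset.range (n+1), ((a+1)/2) * D (n-a)
            = oc (n+1) + ∑ a ∈ Finset.range (n+1), (a/2+1) * D (n-a) := by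
          rw [oc_rec, ec_rec, ← Finset.sum_add_distrib, ← Finset.sum_add_distrib]
          refine Finset.sum_congr rfl fun a ha => ?_
          simp only [Finset.mem_range] at ha
          rw [ihD a (by omega)]
          ring
        have key2 : ∑ a ∈ Finset.range (n+1), (a/2+1) * D (n-a)
            = (∑ a ∈ Finset.range (n+1), ((a+1)/2) * D (n-a)) + Nat.fib (n+1) := by
          rw [← Klem n, ← Finset.sum_add_distrib]
          refine Finset.sum_congr rfl fun a ha => ?_
          rcases Nat.even_or_odd a with he | ho
          · rw [if_pos he]
            obtain ⟨c, rfl⟩ := he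
            have : (c+c)/2 + 1 = (c+c+1)/2 + 1 := by omega
            rw [this]; ring
          · rw [if_neg (by simpa [Nat.not_even_iff_odd] using ho)]
            obtain ⟨c, rfl⟩ := ho
            have : (2*c+1)/2 + 1 = (2*c+1+1)/2 := by omega
            rw [this, add_zero]
        rw [D, if_neg (by omega)]
        omega

/-- `|L^o_{0,0}| = 0`, `|L^e_{0,0}| = 1`, and for `k ≥ 1`,
`|L^o_{k,k}| = (F_{2k} - F_k)/2` and `|L^e_{k,k}| = (F_{2k} + F_k)/2`. -/
theorem stmt17 :
    Lodd 0 0 = 0 ∧ Leven 0 0 = 1 ∧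
    (∀ k : ℕ, 1 ≤ k →
      2 * Lodd k k = Nat.fib (2 * k) - Nat.fib k ∧
      2 * Leven k k = Nat.fib (2 * k) + Nat.fib k) := by
  refine ⟨by rw [Lodd_eq, oc_zero], by rw [Leven_eq, ec_zero], fun k hk => ?_⟩
  have h := main k
  rw [T, if_neg (by omega), D, if_neg (by omega)] at h
  rw [Lodd_eq, Leven_eq]
  omega
end

section
/- Let |M^o_{k,d}| and |M^e_{k,d}| count tuples (m; k₁,…,k_n; l₁,…,l_n) with m ≥ 0, 0 ≤ n, m + k₁+⋯+k_n = k, k_u ≥ 2, l_u ≥ 0, k_u - 1 - l_u ≥ 1 for all u, and Σ_u(k_u - 1 - l_u) ≤ d with that sum odd (resp. even). Then |M^o_{k,d}| = |M^o_{k-1,d}| + |M^e_{k-1,d-1}| and |M^e_{k,d}| = |M^e_{k-1,d}| + |M^o_{k-1,d-1}| for k ≥ 2, d ≥ 1, and consequently |M^o_{k,k}| = |M^e_{k,k}| = 2^{k-2} for all k ≥ 2. -/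
/-- `Modd k d` counts tuples `(m, ((k₁,l₁),…,(k_n,l_n)))` with `m ≥ 0`,
`m + Σ k_u = k`, `k_u ≥ 2`, `k_u - 1 - l_u ≥ 1`, `Σ (k_u - 1 - l_u) ≤ d` and
that sum odd. -/
noncomputable def Modd (k d : ℕ) : ℕ :=
  Nat.card {P : ℕ × List (ℕ × ℕ) //
    P.1 + (P.2.map Prod.fst).sum = k ∧ (∀ p ∈ P.2, p.2 + 2 ≤ p.1) ∧
    (P.2.map fun p => p.1 - 1 - p.2).sum ≤ d ∧ Odd (P.2.map fun p => p.1 - 1 - p.2).sum}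

/-- Even counterpart of `Modd`. -/
noncomputable def Meven (k d : ℕ) : ℕ :=
  Nat.card {P : ℕ × List (ℕ × ℕ) //
    P.1 + (P.2.map Prod.fst).sum = k ∧ (∀ p ∈ P.2, p.2 + 2 ≤ p.1) ∧
    (P.2.map fun p => p.1 - 1 - p.2).sum ≤ d ∧ Even (P.2.map fun p => p.1 - 1 - p.2).sum}

/-!
Write a tuple as `(m, L)` with `L = [(k₁, l₁), …, (k_n, l_n)]`; its weight is `m + Σ k_u` and
its degree `Σ (k_u - 1 - l_u)`. Tuples of weight `k + 2` with `m ≥ 1` correspond to tuples of weight `k + 1`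
by lowering `m`. When `m = 0`, the first block `(k₁, l₁)` is lowered to `(k₁ - 1, l₁)` if it
contributes at least `2` to the degree, and otherwise (contribution exactly `1`) it is deleted and
`k₁ - 1 ≥ 1` becomes the new `m`; either way weight and degree drop by one, which gives the
recurrences. The degree never exceeds the weight, so the bound `d` is void once `d ≥ k`, and on
the diagonal both counts double at each step from `|M^o_{1,·}| = 0`, `|M^e_{1,·}| = 1`.
-/

lemma List.finite_length_le_forall_mem {α : Type*} {s : Set α} (hs : s.Finite) (n : ℕ) :
    {l : List α | l.length ≤ n ∧ ∀ x ∈ l, x ∈ s}.Finite := by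
  have := hs.to_subtype
  refine ((List.finite_length_le s n).image (List.map Subtype.val)).subset ?_
  rintro l ⟨hlen, hmem⟩
  exact ⟨l.pmap Subtype.mk hmem, by simpa using hlen, by simp [List.map_pmap]⟩

namespace MTuples

def size (L : List (ℕ × ℕ)) : ℕ := (L.map Prod.fst).sum

def degree (L : List (ℕ × ℕ)) : ℕ := (L.map fun p => p.1 - 1 - p.2).sum

@[simp] lemma size_nil : size [] = 0 := rfl

@[simp] lemma size_cons (a b : ℕ) (L : List (ℕ × ℕ)) : size ((a, b) :: L) = a + size L := by
  simp [size]

@[simp] lemma degree_nil : degree [] = 0 := rfl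

@[simp] lemma degree_cons (a b : ℕ) (L : List (ℕ × ℕ)) :
    degree ((a, b) :: L) = (a - 1 - b) + degree L := by
  simp [degree]

lemma degree_le_size (L : List (ℕ × ℕ)) : degree L ≤ size L := by
  induction L with
  | nil => simp
  | cons p L ih => obtain ⟨a, b⟩ := p; simp only [degree_cons, size_cons]; omega

def tuples (k d : ℕ) (q : ℕ → Prop) : Set (ℕ × List (ℕ × ℕ)) :=
  {P | P.1 + size P.2 = k ∧ (∀ p ∈ P.2, p.2 + 2 ≤ p.1) ∧ degree P.2 ≤ d ∧ q (degree P.2)}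

@[simp] lemma mem_tuples {k d : ℕ} {q : ℕ → Prop} {m : ℕ} {L : List (ℕ × ℕ)} :
    (m, L) ∈ tuples k d q ↔
      m + size L = k ∧ (∀ p ∈ L, p.2 + 2 ≤ p.1) ∧ degree L ≤ d ∧ q (degree L) :=
  Iff.rfl

lemma modd_eq_card_tuples (k d : ℕ) : Modd k d = Nat.card (tuples k d Odd) := rfl

lemma meven_eq_card_tuples (k d : ℕ) : Meven k d = Nat.card (tuples k d Even) := rfl

lemma length_le_size {L : List (ℕ × ℕ)} (hL : ∀ p ∈ L, p.2 + 2 ≤ p.1) : L.length ≤ size L := by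
  induction L with
  | nil => simp
  | cons p L ih =>
    obtain ⟨a, b⟩ := p
    have := hL (a, b) List.mem_cons_self
    have := ih fun p hp => hL p (List.mem_cons_of_mem _ hp)
    simp only [List.length_cons, size_cons]; omega

lemma le_size_of_mem {L : List (ℕ × ℕ)} {p : ℕ × ℕ} (hp : p ∈ L) : p.1 ≤ size L := by
  induction L with
  | nil => simp at hp
  | cons r L ih =>
    obtain ⟨a, b⟩ := r
    rcases List.mem_cons.mp hp with rfl | hp
    · simp
    · have := ih hp; simp only [size_cons]; omega

lemma finite_tuples (k d : ℕ) (q : ℕ → Prop) : (tuples k d q).Finite := by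
  refine ((Set.finite_Iic k).prod (List.finite_length_le_forall_mem
    ((Set.finite_Iic k).prod (Set.finite_Iic k)) k)).subset ?_
  rintro ⟨m, L⟩ ⟨hsum, hL, -⟩
  dsimp only at hsum hL
  simp only [Set.mem_prod, Set.mem_Iic, Set.mem_ofPred_eq]
  refine ⟨by omega, by have := length_le_size hL; omega, fun p hp => ?_⟩
  have := le_size_of_mem hp
  have := hL p hp
  omega

-- The clauses at `(0, [])` only make `shrink` and `grow` total: no tuple of positive weight has
-- this form.
def shrink : ℕ × List (ℕ × ℕ) → (ℕ × List (ℕ × ℕ)) ⊕ (ℕ × List (ℕ × ℕ))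
  | (m + 1, L) => .inl (m, L)
  | (0, []) => .inl (0, [])
  | (0, (a, b) :: L) => if b + 3 ≤ a then .inr (0, (a - 1, b) :: L) else .inr (a - 1, L)

def grow : (ℕ × List (ℕ × ℕ)) ⊕ (ℕ × List (ℕ × ℕ)) → ℕ × List (ℕ × ℕ)
  | .inl (m, L) => (m + 1, L)
  | .inr (0, []) => (0, [])
  | .inr (0, (a, b) :: L) => (0, (a + 1, b) :: L)
  | .inr (m + 1, L) => (0, (m + 2, m) :: L)

section Recurrence

variable {k d : ℕ} {q : ℕ → Prop}

abbrev splitPred (k d : ℕ) (q : ℕ → Prop) : (ℕ × List (ℕ × ℕ)) ⊕ (ℕ × List (ℕ × ℕ)) → Prop :=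
  Sum.elim (· ∈ tuples (k + 1) (d + 1) q) (· ∈ tuples (k + 1) d fun n => q (n + 1))

lemma shrink_mem {P : ℕ × List (ℕ × ℕ)} (hP : P ∈ tuples (k + 2) (d + 1) q) :
    splitPred k d q (shrink P) := by
  obtain ⟨_ | m, L⟩ := P
  · obtain _ | ⟨⟨a, b⟩, L⟩ := L
    · simp at hP
    simp only [mem_tuples, size_cons, degree_cons, List.mem_cons, forall_eq_or_imp] at hP
    obtain ⟨hsum, ⟨hab, hL⟩, hdeg, hq⟩ := hP
    simp only [shrink]
    split_ifs with h
    · simp only [Sum.elim_inr, mem_tuples, size_cons, degree_cons, List.mem_cons,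
        forall_eq_or_imp]
      exact ⟨by omega, ⟨by omega, hL⟩, by omega, by convert hq using 1; omega⟩
    · simp only [Sum.elim_inr, mem_tuples]
      exact ⟨by omega, hL, by omega, by convert hq using 1; omega⟩
  · rw [mem_tuples] at hP
    simp only [shrink, Sum.elim_inl, mem_tuples]
    exact ⟨by omega, hP.2⟩

lemma grow_mem {s : (ℕ × List (ℕ × ℕ)) ⊕ (ℕ × List (ℕ × ℕ))} (hs : splitPred k d q s) :
    grow s ∈ tuples (k + 2) (d + 1) q := by
  obtain ⟨m, L⟩ | ⟨_ | m, L⟩ := s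
  · rw [splitPred, Sum.elim_inl, mem_tuples] at hs
    simp only [grow, mem_tuples]
    exact ⟨by omega, hs.2⟩
  · obtain _ | ⟨⟨a, b⟩, L⟩ := L
    · simp at hs
    simp only [splitPred, Sum.elim_inr, mem_tuples, size_cons, degree_cons, List.mem_cons,
      forall_eq_or_imp] at hs
    obtain ⟨hsum, ⟨hab, hL⟩, hdeg, hq⟩ := hs
    simp only [grow, mem_tuples, size_cons, degree_cons, List.mem_cons, forall_eq_or_imp]
    exact ⟨by omega, ⟨by omega, hL⟩, by omega, by convert hq using 1; omega⟩
  · simp only [splitPred, Sum.elim_inr, mem_tuples] at hs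
    obtain ⟨hsum, hL, hdeg, hq⟩ := hs
    simp only [grow, mem_tuples, size_cons, degree_cons, List.mem_cons, forall_eq_or_imp]
    exact ⟨by omega, ⟨by omega, hL⟩, by omega, by convert hq using 1; omega⟩

lemma grow_shrink {P : ℕ × List (ℕ × ℕ)} (hP : P ∈ tuples (k + 2) (d + 1) q) :
    grow (shrink P) = P := by
  obtain ⟨_ | m, L⟩ := P
  · obtain _ | ⟨⟨a, b⟩, L⟩ := L
    · simp at hP
    simp only [mem_tuples, List.mem_cons, forall_eq_or_imp] at hP
    simp only [shrink]
    split_ifs with h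
    · simp only [grow, Nat.sub_add_cancel (show 1 ≤ a by omega)]
    · obtain rfl : a = b + 2 := by omega
      rfl
  · rfl

lemma shrink_grow {s : (ℕ × List (ℕ × ℕ)) ⊕ (ℕ × List (ℕ × ℕ))} (hs : splitPred k d q s) :
    shrink (grow s) = s := by
  obtain ⟨m, L⟩ | ⟨_ | m, L⟩ := s
  · rfl
  · obtain _ | ⟨⟨a, b⟩, L⟩ := L
    · simp at hs
    simp only [splitPred, Sum.elim_inr, mem_tuples, List.mem_cons, forall_eq_or_imp] at hs
    simp only [grow, shrink, if_pos (show b + 3 ≤ a + 1 by omega), Nat.add_sub_cancel]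
  · simp only [grow, shrink, if_neg (show ¬m + 3 ≤ m + 2 by omega)]
    rfl

def tuplesEquiv (k d : ℕ) (q : ℕ → Prop) :
    tuples (k + 2) (d + 1) q ≃ tuples (k + 1) (d + 1) q ⊕ tuples (k + 1) d fun n => q (n + 1) :=
  Equiv.trans (β := {s // splitPred k d q s})
  { toFun P := ⟨shrink P, shrink_mem P.2⟩
    invFun s := ⟨grow s, grow_mem s.2⟩
    left_inv P := Subtype.ext (grow_shrink P.2)
    right_inv s := Subtype.ext (shrink_grow s.2) } Equiv.subtypeSum

lemma card_tuples_add_two (k d : ℕ) (q : ℕ → Prop) :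
    Nat.card (tuples (k + 2) (d + 1) q) =
      Nat.card (tuples (k + 1) (d + 1) q) + Nat.card (tuples (k + 1) d fun n => q (n + 1)) := by
  have := (finite_tuples (k + 1) (d + 1) q).to_subtype
  have := (finite_tuples (k + 1) d fun n => q (n + 1)).to_subtype
  rw [Nat.card_congr (tuplesEquiv k d q), Nat.card_sum]

end Recurrence

lemma tuples_eq_of_le {k d : ℕ} (q : ℕ → Prop) (h : k ≤ d) : tuples k d q = tuples k k q := by
  ext ⟨m, L⟩
  have := degree_le_size L
  simp only [mem_tuples]
  constructor <;> rintro ⟨hsum, hL, -, hq⟩ <;> exact ⟨hsum, hL, by omega, hq⟩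

lemma tuples_one (d : ℕ) (q : ℕ → Prop) : tuples 1 d q = {P | P = (1, []) ∧ q 0} := by
  ext ⟨m, _ | ⟨⟨a, b⟩, L⟩⟩
  · simp
  · simp; omega

lemma card_tuples_one (d : ℕ) (q : ℕ → Prop) [Decidable (q 0)] :
    Nat.card (tuples 1 d q) = if q 0 then 1 else 0 := by
  rw [tuples_one]
  split_ifs with h <;> simp [h]

lemma card_tuples_diag (k : ℕ) :
    Nat.card (tuples (k + 2) (k + 2) Odd) = 2 ^ k ∧
      Nat.card (tuples (k + 2) (k + 2) Even) = 2 ^ k := by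
  induction k with
  | zero =>
    simp only [card_tuples_add_two 0 1, zero_add, Nat.odd_add_one, Nat.not_odd_iff_even,
      Nat.even_add_one, Nat.not_even_iff_odd, card_tuples_one]
    simp
  | succ k ih =>
    simp only [card_tuples_add_two (k + 1) (k + 2), tuples_eq_of_le _ (show k + 2 ≤ k + 3 by omega),
      Nat.odd_add_one, Nat.not_odd_iff_even, Nat.even_add_one, Nat.not_even_iff_odd, ih, pow_succ]
    omega

end MTuples

open MTuples in
/-- Recurrences for `|M^o_{k,d}|`, `|M^e_{k,d}|` and the evaluation
`|M^o_{k,k}| = |M^e_{k,k}| = 2^{k-2}` for `k ≥ 2`. -/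
theorem stmt18 :
    (∀ k d : ℕ, 2 ≤ k → 1 ≤ d →
      Modd k d = Modd (k - 1) d + Meven (k - 1) (d - 1) ∧
      Meven k d = Meven (k - 1) d + Modd (k - 1) (d - 1)) ∧
    (∀ k : ℕ, 2 ≤ k → Modd k k = 2 ^ (k - 2) ∧ Meven k k = 2 ^ (k - 2)) := by
  refine ⟨fun k d hk hd => ?_, fun k hk => ?_⟩
  · obtain ⟨k, rfl⟩ := Nat.exists_eq_add_of_le' hk
    obtain ⟨d, rfl⟩ := Nat.exists_eq_add_of_le' hd
    simp only [modd_eq_card_tuples, meven_eq_card_tuples, card_tuples_add_two, Nat.odd_add_one,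
      Nat.not_odd_iff_even, Nat.even_add_one, Nat.not_even_iff_odd]
    simp
  · obtain ⟨k, rfl⟩ := Nat.exists_eq_add_of_le' hk
    simpa [modd_eq_card_tuples, meven_eq_card_tuples] using card_tuples_diag k
end
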